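/- The optimal value of the optimized mechanism's problem is less than or equal to the optimal value of the robust mechanism's problem: for every feasible (R, q) of the robust problem there is a feasible point of the optimized problem with cost at most cost_rob(R, q). -/

import Mathlib

open Finset

/-- Demand shifted from `z` to `i` in the optimized mechanism. -/
noncomputable def shiftedOpt {N : ℕ} (E0 : Fin N → ℝ)
    (P : Fin N → Fin N → ℝ → ℝ) (R q : Fin N → Fin N → ℝ) (z i : Fin N) : ℝ :=
  q z i * P z i (R z i) * E0 z

/-- Realized aggregate demand in slot `i` for the optimized mechanism. -/
noncomputable def realizedOpt {N : ℕ} (E0 : Fin N → ℝ)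
    (P : Fin N → Fin N → ℝ → ℝ) (R q : Fin N → Fin N → ℝ) (i : Fin N) : ℝ :=
  E0 i + ∑ z, shiftedOpt E0 P R q z i - ∑ k, shiftedOpt E0 P R q i k

/-- Cost of the optimized mechanism. -/
noncomputable def costOpt {N : ℕ} (E0 : Fin N → ℝ)
    (P : Fin N → Fin N → ℝ → ℝ) (c : Fin N → ℝ → ℝ)
    (R q : Fin N → Fin N → ℝ) : ℝ :=
  (∑ i, ∑ z, if z ≠ i then R z i * shiftedOpt E0 P R q z i else 0) +
    ∑ i, c i (realizedOpt E0 P R q i)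

/-- Demand shifted from `z` to `i` in the robust mechanism
(`E_{i→i} = q_i E⁰_i` stays in place but is also rewarded). -/
noncomputable def shiftedRob {N : ℕ} (E0 : Fin N → ℝ)
    (P : Fin N → Fin N → ℝ → ℝ) (R q : Fin N → ℝ) (z i : Fin N) : ℝ :=
  if z = i then q i * E0 i else q i * P z i (R i) * E0 z

/-- Realized aggregate demand in slot `i` for the robust mechanism. -/
noncomputable def realizedRob {N : ℕ} (E0 : Fin N → ℝ)
    (P : Fin N → Fin N → ℝ → ℝ) (R q : Fin N → ℝ) (i : Fin N) : ℝ :=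
  E0 i + (∑ z, if z ≠ i then shiftedRob E0 P R q z i else 0)
    - ∑ k, if k ≠ i then shiftedRob E0 P R q i k else 0

/-- Cost of the robust mechanism: the discount `R i` is paid on all demand ending
up in slot `i` of users in `Q_i`, including the unshifted part `E_{i→i}`. -/
noncomputable def costRob {N : ℕ} (E0 : Fin N → ℝ)
    (P : Fin N → Fin N → ℝ → ℝ) (c : Fin N → ℝ → ℝ) (R q : Fin N → ℝ) : ℝ :=
  (∑ i, ∑ z, R i * shiftedRob E0 P R q z i) +
    ∑ i, c i (realizedRob E0 P R q i)

/- The constant-in-`z` choice makes every off-diagonal transfer of the two mechanisms coincide, and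
the diagonal transfer `z = i` cancels in `realizedOpt`, so both mechanisms realize the same demand
and pay the same off-diagonal rewards. The robust cost exceeds the optimized one exactly by the
rewards `R i * q i * E0 i` on unshifted demand, which are nonnegative. -/

theorem Finset.sum_ite_ne_add {ι M : Type*} [Fintype ι] [DecidableEq ι] [AddCommMonoid M]
    (f : ι → M) (i : ι) : (∑ z, if z ≠ i then f z else 0) + f i = ∑ z, f z := by
  rw [← Finset.sum_filter, Finset.filter_ne', Finset.sum_erase_add _ _ (Finset.mem_univ i)]

section
variable {N : ℕ} (E0 : Fin N → ℝ) (P : Fin N → Fin N → ℝ → ℝ) (c : Fin N → ℝ → ℝ)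
  (R q : Fin N → ℝ)

theorem shiftedOpt_const_eq_shiftedRob {z i : Fin N} (h : z ≠ i) :
    shiftedOpt E0 P (fun _ i => R i) (fun _ i => q i) z i = shiftedRob E0 P R q z i := by
  simp [shiftedOpt, shiftedRob, h]

theorem realizedOpt_const_eq_realizedRob (i : Fin N) :
    realizedOpt E0 P (fun _ i => R i) (fun _ i => q i) i = realizedRob E0 P R q i := by
  have hin : ∀ z, (if z ≠ i then shiftedOpt E0 P (fun _ i => R i) (fun _ i => q i) z i else 0) =
      if z ≠ i then shiftedRob E0 P R q z i else 0 := fun _ =>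
    ite_congr rfl (shiftedOpt_const_eq_shiftedRob E0 P R q) fun _ => rfl
  have hout : ∀ k, (if k ≠ i then shiftedOpt E0 P (fun _ i => R i) (fun _ i => q i) i k else 0) =
      if k ≠ i then shiftedRob E0 P R q i k else 0 := fun _ =>
    ite_congr rfl (fun h => shiftedOpt_const_eq_shiftedRob E0 P R q (Ne.symm h)) fun _ => rfl
  rw [realizedOpt, ← Finset.sum_ite_ne_add _ i,
    ← Finset.sum_ite_ne_add (fun k => shiftedOpt _ _ _ _ i k) i]
  simp only [hin, hout, realizedRob]
  ring

theorem costRob_eq_costOpt_const_add :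
    costRob E0 P c R q =
      costOpt E0 P c (fun _ i => R i) (fun _ i => q i) + ∑ i, R i * (q i * E0 i) := by
  have hreward : ∀ i, ∑ z, R i * shiftedRob E0 P R q z i =
      (∑ z, if z ≠ i then R i * shiftedOpt E0 P (fun _ i => R i) (fun _ i => q i) z i else 0) +
        R i * (q i * E0 i) := fun i => by
    rw [← Finset.sum_ite_ne_add _ i]
    congr 1
    · refine Finset.sum_congr rfl fun _ _ => ite_congr rfl (fun h => ?_) fun _ => rfl
      rw [shiftedOpt_const_eq_shiftedRob E0 P R q h]
    · simp [shiftedRob]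
  simp only [costRob, costOpt, hreward, Finset.sum_add_distrib,
    realizedOpt_const_eq_realizedRob]
  ring

end

theorem optimized_le_robust_general {N : ℕ} (B : ℝ) (E0 : Fin N → ℝ)
    (hE0 : ∀ j, 0 ≤ E0 j)
    (P : Fin N → Fin N → ℝ → ℝ)
    (c : Fin N → ℝ → ℝ)
    (R q : Fin N → ℝ)
    (hR : ∀ i, R i ∈ Set.Icc 0 B)
    (hq : ∀ i, q i ∈ Set.Icc (0 : ℝ) 1)
    (hqsum : ∑ i, q i ≤ 1) :
    (∀ z i, (fun (_ : Fin N) i => R i) z i ∈ Set.Icc 0 B) ∧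
    (∀ z i, (fun (_ : Fin N) i => q i) z i ∈ Set.Icc (0 : ℝ) 1) ∧
    (∀ z : Fin N, ∑ i, (fun (_ : Fin N) i => q i) z i ≤ 1) ∧
    costOpt E0 P c (fun _ i => R i) (fun _ i => q i) ≤ costRob E0 P c R q := by
  refine ⟨fun _ i => hR i, fun _ i => hq i, fun _ => hqsum, ?_⟩
  rw [costRob_eq_costOpt_const_add]
  have hunshifted : 0 ≤ ∑ i, R i * (q i * E0 i) :=
    Finset.sum_nonneg fun i _ => mul_nonneg (hR i).1 (mul_nonneg (hq i).1 (hE0 i))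
  linarith

/-- Every feasible point `(R, q)` of the robust problem maps to the
feasible point `R_{z→i} := R_i`, `q_{z→i} := q_i` of the optimized problem whose
cost is at most `cost_rob(R, q)`; hence the optimized optimal value is at most the
robust optimal value. -/
theorem optimized_le_robust {N : ℕ} (B : ℝ) (hB : 0 ≤ B) (E0 : Fin N → ℝ)
    (hE0 : ∀ j, 0 ≤ E0 j)
    (P : Fin N → Fin N → ℝ → ℝ)
    (hP : ∀ z i r, P z i r ∈ Set.Icc (0 : ℝ) 1)
    (c : Fin N → ℝ → ℝ)
    (R q : Fin N → ℝ)
    (hR : ∀ i, R i ∈ Set.Icc 0 B)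
    (hq : ∀ i, q i ∈ Set.Icc (0 : ℝ) 1)
    (hqsum : ∑ i, q i ≤ 1) :
    (∀ z i, (fun (_ : Fin N) i => R i) z i ∈ Set.Icc 0 B) ∧
    (∀ z i, (fun (_ : Fin N) i => q i) z i ∈ Set.Icc (0 : ℝ) 1) ∧
    (∀ z : Fin N, ∑ i, (fun (_ : Fin N) i => q i) z i ≤ 1) ∧
    costOpt E0 P c (fun _ i => R i) (fun _ i => q i) ≤ costRob E0 P c R q :=
  optimized_le_robust_general B E0 hE0 P c R q hR hq hqsum
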